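/- arXiv:1912.06696 — 3 statements merged into one kernel-verified Lean document; each statement's English description precedes it below -/
import Mathlib

section
/- Let A(x,y) = ℂ(x,y) with Poisson bracket determined by {x,y} = x. An affine map φ(x) = α₁x + β₁y + γ₁, φ(y) = α₂x + β₂y + γ₂ with α₁β₂ ≠ α₂β₁ is a Poisson algebra automorphism of A(x,y) if and only if β₁ = 0, γ₁ = 0, and β₂ = 1, i.e. φ(x) = α₁x and φ(y) = α₂x + y + γ₂. -/
open MvPolynomial

/-- A Poisson bracket on a commutative `ℂ`-algebra. -/
structure PoissonBracket (A : Type*) [CommRing A] [Algebra ℂ A] where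
  br : A →ₗ[ℂ] A →ₗ[ℂ] A
  antisymm : ∀ a b : A, br a b = - br b a
  leibniz : ∀ a b c : A, br a (b * c) = br a b * c + b * br a c
  jacobi : ∀ a b c : A, br a (br b c) + br b (br c a) + br c (br a b) = 0

/-- The field of rational functions `ℂ(x,y)`. -/
noncomputable abbrev Kxy : Type := FractionRing (MvPolynomial (Fin 2) ℂ)

noncomputable def xx : Kxy := algebraMap (MvPolynomial (Fin 2) ℂ) Kxy (X 0)
noncomputable def yy : Kxy := algebraMap (MvPolynomial (Fin 2) ℂ) Kxy (X 1)
noncomputable def cc (z : ℂ) : Kxy := algebraMap ℂ Kxy z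

/-! For fixed `a`, `{a, ·}` is a derivation, and a derivation of `ℂ(x,y)` is determined by its
values on `x` and `y`; by antisymmetry a Poisson bracket on `ℂ(x,y)` is therefore determined by
`{x, y}`. Applied to `{·,·}` and its pullback `φ⁻¹ {φ ·, φ ·}`, this shows that `φ` is a Poisson
automorphism iff `{φ x, φ y} = φ x`. For affine `φ` the left side is `(α₁β₂ - α₂β₁) x`, and
comparing the coefficients of `x`, `y`, `1` gives the conditions. -/

namespace PoissonBracket

variable {A : Type*} [CommRing A] [Algebra ℂ A] (B : PoissonBracket A)

lemma br_self (a : A) : B.br a a = 0 := by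
  have h : (2 : ℂ) • B.br a a = 0 := by
    rw [two_smul]
    exact eq_neg_iff_add_eq_zero.mp (B.antisymm a a)
  exact (smul_eq_zero.mp h).resolve_left two_ne_zero

def hamiltonian (a : A) : Derivation ℂ A A where
  toLinearMap := B.br a
  map_one_eq_zero' := by simpa using B.leibniz a 1 1
  leibniz' b c := by
    show B.br a (b * c) = b * B.br a c + c * B.br a b
    rw [B.leibniz]; ring

@[simp]
lemma hamiltonian_apply (a b : A) : B.hamiltonian a b = B.br a b := rfl

lemma br_algebraMap (a : A) (z : ℂ) : B.br a (algebraMap ℂ A z) = 0 :=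
  (B.hamiltonian a).map_algebraMap z

lemma algebraMap_br (z : ℂ) (a : A) : B.br (algebraMap ℂ A z) a = 0 := by
  rw [B.antisymm, br_algebraMap, neg_zero]

lemma br_affine (u v : A) (a₁ b₁ c₁ a₂ b₂ c₂ : ℂ) :
    B.br (algebraMap ℂ A a₁ * u + algebraMap ℂ A b₁ * v + algebraMap ℂ A c₁)
        (algebraMap ℂ A a₂ * u + algebraMap ℂ A b₂ * v + algebraMap ℂ A c₂) =
      algebraMap ℂ A (a₁ * b₂ - a₂ * b₁) * B.br u v := by
  simp only [← Algebra.smul_def, map_add, map_smul, LinearMap.add_apply, LinearMap.smul_apply,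
    br_self, br_algebraMap, algebraMap_br, smul_zero, add_zero, zero_add]
  rw [B.antisymm v u]
  module

/-- `{a, b}' = φ⁻¹ {φ a, φ b}` -/
def comap (φ : A ≃ₐ[ℂ] A) : PoissonBracket A where
  br := (B.br.compr₂ φ.symm.toLinearMap).compl₁₂ φ.toLinearMap φ.toLinearMap
  antisymm a b := by simp [B.antisymm (φ a)]
  leibniz a b c := by simp [B.leibniz]
  jacobi a b c := by simp [← map_add, B.jacobi]

lemma comap_br (φ : A ≃ₐ[ℂ] A) (a b : A) : (B.comap φ).br a b = φ.symm (B.br (φ a) (φ b)) := rfl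

end PoissonBracket

lemma IsFractionRing.derivation_ext {k R K M : Type*} [CommRing k] [CommRing R] [Field K]
    [Algebra R K] [IsFractionRing R K] [Algebra k K] [AddCommGroup M] [Module K M] [Module k M]
    {D₁ D₂ : Derivation k K M} (h : ∀ r, D₁ (algebraMap R K r) = D₂ (algebraMap R K r)) :
    D₁ = D₂ := by
  ext a
  obtain ⟨p, q, -, rfl⟩ := IsFractionRing.div_surjective R a
  rw [Derivation.leibniz_div, Derivation.leibniz_div, h, h]

lemma Kxy.derivation_ext {D₁ D₂ : Derivation ℂ Kxy Kxy} (hx : D₁ xx = D₂ xx)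
    (hy : D₁ yy = D₂ yy) : D₁ = D₂ := by
  refine IsFractionRing.derivation_ext (R := MvPolynomial (Fin 2) ℂ) fun p => ?_
  have := MvPolynomial.derivation_ext (D₁ := D₁.compAlgebraMap (MvPolynomial (Fin 2) ℂ))
    (D₂ := D₂.compAlgebraMap (MvPolynomial (Fin 2) ℂ)) (by
      intro i; fin_cases i
      exacts [hx, hy])
  exact congr($this p)

lemma PoissonBracket.br_eq_of_br_xx_yy {B B' : PoissonBracket Kxy}
    (h : B.br xx yy = B'.br xx yy) (a b : Kxy) : B.br a b = B'.br a b := by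
  have hx : B.hamiltonian xx = B'.hamiltonian xx :=
    Kxy.derivation_ext (by simp [br_self]) (by simpa using h)
  have hy : B.hamiltonian yy = B'.hamiltonian yy :=
    Kxy.derivation_ext (by simp only [hamiltonian_apply, B.antisymm yy, B'.antisymm yy, h])
      (by simp [br_self])
  have ha : B.hamiltonian a = B'.hamiltonian a := by
    refine Kxy.derivation_ext ?_ ?_ <;>
      rw [hamiltonian_apply, hamiltonian_apply, B.antisymm, B'.antisymm]
    exacts [congr(-$hx a), congr(-$hy a)]
  exact congr($ha b)

lemma Kxy.map_br_iff (B : PoissonBracket Kxy) (φ : Kxy ≃ₐ[ℂ] Kxy) :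
    (∀ a b, φ (B.br a b) = B.br (φ a) (φ b)) ↔ φ (B.br xx yy) = B.br (φ xx) (φ yy) := by
  refine ⟨fun h => h xx yy, fun h a b => ?_⟩
  have hcomap : B.br a b = (B.comap φ).br a b :=
    PoissonBracket.br_eq_of_br_xx_yy (by rw [B.comap_br, ← h, φ.symm_apply_apply]) a b
  rw [hcomap, B.comap_br, φ.apply_symm_apply]

lemma Kxy.affine_eq_affine_iff {a b c a' b' c' : ℂ} :
    cc a * xx + cc b * yy + cc c = cc a' * xx + cc b' * yy + cc c' ↔
      a = a' ∧ b = b' ∧ c = c' := by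
  have hpoly (a b c : ℂ) : cc a * xx + cc b * yy + cc c =
      algebraMap (MvPolynomial (Fin 2) ℂ) Kxy (C a * X 0 + C b * X 1 + C c) := by
    simp [xx, yy, cc, ← MvPolynomial.algebraMap_eq,
      IsScalarTower.algebraMap_apply ℂ (MvPolynomial (Fin 2) ℂ) Kxy]
  rw [hpoly, hpoly, (IsFractionRing.injective _ _).eq_iff]
  refine ⟨fun h => ?_, by rintro ⟨rfl, rfl, rfl⟩; rfl⟩
  have h₀ := congr(eval ![0, 0] $h)
  have h₁ := congr(eval ![1, 0] $h)
  have h₂ := congr(eval ![0, 1] $h)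
  simp at h₀ h₁ h₂
  exact ⟨by linear_combination h₁ - h₀, by linear_combination h₂ - h₀, h₀⟩

/-- For `ℂ(x,y)` with the Poisson bracket determined by `{x,y} = x`,
an affine map `φ(x) = α₁x + β₁y + γ₁`, `φ(y) = α₂x + β₂y + γ₂` with
`α₁β₂ ≠ α₂β₁` is a Poisson algebra automorphism if and only if `β₁ = 0`,
`γ₁ = 0` and `β₂ = 1`, i.e. `φ(x) = α₁x` and `φ(y) = α₂x + y + γ₂`. -/
theorem stmt4 (B : PoissonBracket Kxy) (hB : B.br xx yy = xx)
    (α₁ β₁ γ₁ α₂ β₂ γ₂ : ℂ) (hd : α₁ * β₂ ≠ α₂ * β₁)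
    (φ : Kxy ≃ₐ[ℂ] Kxy)
    (hφx : φ xx = cc α₁ * xx + cc β₁ * yy + cc γ₁)
    (hφy : φ yy = cc α₂ * xx + cc β₂ * yy + cc γ₂) :
    (∀ a b : Kxy, φ (B.br a b) = B.br (φ a) (φ b)) ↔
      (β₁ = 0 ∧ γ₁ = 0 ∧ β₂ = 1) := by
  have hbr : B.br (φ xx) (φ yy) = cc (α₁ * β₂ - α₂ * β₁) * xx + cc 0 * yy + cc 0 := calc
    _ = cc (α₁ * β₂ - α₂ * β₁) * B.br xx yy := by
      rw [hφx, hφy]; exact B.br_affine xx yy α₁ β₁ γ₁ α₂ β₂ γ₂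
    _ = _ := by simp [hB, cc]
  rw [Kxy.map_br_iff, hB, hbr, hφx, Kxy.affine_eq_affine_iff]
  constructor
  · rintro ⟨h, rfl, rfl⟩
    have hα₁ : α₁ ≠ 0 := by rintro rfl; simp at hd
    exact ⟨rfl, rfl, mul_left_cancel₀ hα₁ (by linear_combination -h)⟩
  · rintro ⟨rfl, rfl, rfl⟩
    simp
end

section
/- Let g(x) = [[a(x), b(x)],[b(x), c(x)]] and g̃(x) = [[ã(x), b̃(x)],[b̃(x), c̃(x)]] with entries in ℂ[x], det g ≠ 0, det g̃ ≠ 0, c(x) ≠ 0. Suppose there exists α ∈ ℂ \ {0} such that (1) (ã(x) − α²a(αx))·c(αx) = b̃(x)² − α²b(αx)², (2) (b̃(x) − αb(αx))/c(αx) ∈ ℂ[x], and (3) c̃(x) = c(αx). Then with p'(x) = (b̃(x) − αb(αx))/c(αx) and A = [[α,0],[p'(x),1]], one has g̃(x) = Aᵀ g(αx) A. -/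
open Polynomial Matrix

/-!
Condition (2) says `b̃ = α b(αx) + p c(αx)`, so `b̃² − α² b(αx)² = p c(αx) (2α b(αx) + p c(αx))`;
cancelling the nonzero factor `c(αx)` in (1) gives `ã = α² a(αx) + 2α p b(αx) + p² c(αx)`.
These are exactly the entries of `Aᵀ g(αx) A`.
-/

theorem Polynomial.comp_C_mul_X_ne_zero {R : Type*} [Semiring R] [NoZeroDivisors R] {α : R}
    (hα : α ≠ 0) {c : R[X]} (hc : c ≠ 0) : c.comp (C α * X) ≠ 0 := by
  intro h
  rcases comp_eq_zero_iff.mp h with h | ⟨-, h⟩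
  · exact hc h
  · simpa [hα] using congrArg (coeff · 1) h

theorem Matrix.transpose_mul_mul_fin_two_lower {R : Type*} [CommRing R] (s p a b c : R) :
    !![s, 0; p, 1]ᵀ * !![a, b; b, c] * !![s, 0; p, 1] =
      !![s ^ 2 * a + 2 * s * p * b + p ^ 2 * c, s * b + p * c; s * b + p * c, c] := by
  ext i j
  fin_cases i <;> fin_cases j <;> simp [Matrix.mul_apply, Fin.sum_univ_two] <;> ring

theorem eq_add_of_sub_mul_eq_sq_sub_sq {R : Type*} [CommRing R] [IsDomain R]
    {s a b c ta tb p : R} (hc : c ≠ 0) (h1 : (ta - s ^ 2 * a) * c = tb ^ 2 - s ^ 2 * b ^ 2)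
    (h2 : tb - s * b = p * c) :
    ta = s ^ 2 * a + 2 * s * p * b + p ^ 2 * c := by
  have h : (ta - s ^ 2 * a) * c = (2 * s * p * b + p ^ 2 * c) * c := by
    rw [h1, sub_eq_iff_eq_add.mp h2]; ring
  linear_combination mul_right_cancel₀ hc h

theorem stmt13_general (a b c ta tb tc p : Polynomial ℂ) (α : ℂ) (hα : α ≠ 0) (hc : c ≠ 0)
    (h1 : (ta - C (α ^ 2) * a.comp (C α * X)) * c.comp (C α * X) =
      tb ^ 2 - C (α ^ 2) * (b.comp (C α * X)) ^ 2)
    (h2 : tb - C α * b.comp (C α * X) = p * c.comp (C α * X))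
    (h3 : tc = c.comp (C α * X)) :
    (!![ta, tb; tb, tc] : Matrix (Fin 2) (Fin 2) (Polynomial ℂ)) =
      (!![C α, 0; p, 1] : Matrix (Fin 2) (Fin 2) (Polynomial ℂ))ᵀ *
        !![a.comp (C α * X), b.comp (C α * X);
           b.comp (C α * X), c.comp (C α * X)] * !![C α, 0; p, 1] := by
  rw [map_pow] at h1
  have hta := eq_add_of_sub_mul_eq_sq_sub_sq (comp_C_mul_X_ne_zero hα hc) h1 h2
  rw [transpose_mul_mul_fin_two_lower, hta, sub_eq_iff_eq_add.mp h2, h3, add_comm (p * _)]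

/-- Let `g(x) = [[a(x),b(x)],[b(x),c(x)]]`,
`g̃(x) = [[ã(x),b̃(x)],[b̃(x),c̃(x)]]` with entries in `ℂ[x]`, `det g ≠ 0`,
`det g̃ ≠ 0`, `c(x) ≠ 0`.  If there is `α ∈ ℂ \ {0}` with
(1) `(ã(x) − α²a(αx))·c(αx) = b̃(x)² − α²b(αx)²`,
(2) `(b̃(x) − αb(αx))/c(αx) = p(x) ∈ ℂ[x]`, and
(3) `c̃(x) = c(αx)`,
then with `p'(x) := p(x)` and `A = [[α,0],[p'(x),1]]` one has
`g̃(x) = Aᵀ g(αx) A` (an identity of matrices over `ℂ(x)`, here stated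
over `ℂ[x]`). -/
theorem stmt13 (a b c ta tb tc p : Polynomial ℂ) (α : ℂ) (hα : α ≠ 0)
    (hdet : a * c - b ^ 2 ≠ 0) (htdet : ta * tc - tb ^ 2 ≠ 0) (hc : c ≠ 0)
    (h1 : (ta - C (α ^ 2) * a.comp (C α * X)) * c.comp (C α * X) =
      tb ^ 2 - C (α ^ 2) * (b.comp (C α * X)) ^ 2)
    (h2 : tb - C α * b.comp (C α * X) = p * c.comp (C α * X))
    (h3 : tc = c.comp (C α * X)) :
    (!![ta, tb; tb, tc] : Matrix (Fin 2) (Fin 2) (Polynomial ℂ)) =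
      (!![C α, 0; p, 1] : Matrix (Fin 2) (Fin 2) (Polynomial ℂ))ᵀ *
        !![a.comp (C α * X), b.comp (C α * X);
           b.comp (C α * X), c.comp (C α * X)] * !![C α, 0; p, 1] :=
  stmt13_general a b c ta tb tc p α hα hc h1 h2 h3
end

section
/- Let φ be the Poisson algebra automorphism of (ℂ(x,y), {x,y}=x) given by φ(x) = x and φ(y) = y + λ for λ ∈ ℂ. Then for any a(y), c(y) ∈ ℂ[y] and α ∈ ℂ \ {0}, the diagonal metrics g(y) = [[a(y),0],[0,c(y)]] and g̃(y) = [[α²a(y+λ),0],[0,c(y+λ)]] satisfy g̃ = Aᵀ φ(g) A with A = [[α,0],[0,1]], so the corresponding K\"ahler-Poisson algebras are isomorphic. -/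
open Polynomial Matrix

theorem Matrix.transpose_diagonal_mul_diagonal_mul_diagonal {n R : Type*}
    [Fintype n] [DecidableEq n] [CommSemiring R] (e d : n → R) :
    (diagonal e)ᵀ * diagonal d * diagonal e = diagonal fun i => e i ^ 2 * d i := by
  rw [diagonal_transpose, diagonal_mul_diagonal, diagonal_mul_diagonal]
  congr 1
  ext i
  ring

theorem stmt17_general (a c : Polynomial ℂ) (lam α : ℂ) :
    (!![C (α ^ 2) * a.comp (X + C lam), 0; 0, c.comp (X + C lam)] :
        Matrix (Fin 2) (Fin 2) (Polynomial ℂ)) =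
      (!![C α, 0; 0, 1] : Matrix (Fin 2) (Fin 2) (Polynomial ℂ))ᵀ *
        !![a.comp (X + C lam), 0; 0, c.comp (X + C lam)] * !![C α, 0; 0, 1] := by
  rw [← diagonal_vec2 (C α), ← diagonal_vec2 (a.comp _),
    transpose_diagonal_mul_diagonal_mul_diagonal, diagonal_fin_two]
  simp [C_pow]

/-- For the Poisson algebra automorphism of `(ℂ(x,y), {x,y}=x)`
acting on metrics depending on `y` by `a(y) ↦ a(y+λ)`, and any
`a(y), c(y) ∈ ℂ[y]`, `λ ∈ ℂ`, `α ∈ ℂ \ {0}`, the diagonal metrics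
`g(y) = [[a(y),0],[0,c(y)]]` and `g̃(y) = [[α²a(y+λ),0],[0,c(y+λ)]]` satisfy
`g̃ = Aᵀ φ(g) A` with `A = [[α,0],[0,1]]` and `φ(g) = [[a(y+λ),0],[0,c(y+λ)]]`,
so the corresponding Kähler–Poisson algebras are isomorphic. -/
theorem stmt17 (a c : Polynomial ℂ) (lam α : ℂ) (hα : α ≠ 0) :
    (!![C (α ^ 2) * a.comp (X + C lam), 0; 0, c.comp (X + C lam)] :
        Matrix (Fin 2) (Fin 2) (Polynomial ℂ)) =
      (!![C α, 0; 0, 1] : Matrix (Fin 2) (Fin 2) (Polynomial ℂ))ᵀ *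
        !![a.comp (X + C lam), 0; 0, c.comp (X + C lam)] * !![C α, 0; 0, 1] :=
  stmt17_general a c lam α
end
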